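/- The ogre Y* = (λxy.xx)(λxy.xx) is a top element of the observational preorder: for every closed term M, M ⊑ Y*, i.e., whenever M P₁⋯Pₖ converges for closed P₁,…,Pₖ, so does Y* P₁⋯Pₖ. -/
import Mathlib


-- Computational and parallel types
mutual
  inductive CTy : Type
    | one : CTy
    | tens : CTy → CTy → CTy
    | arr : CTy → PTy → CTy
  inductive PTy : Type
    | ofC : CTy → PTy
    | par : PTy → PTy → PTy
end

-- Type equivalence: AC of ⊗ and ⅋, 1 neutral for ⊗
mutual
  inductive CEq : CTy → CTy → Prop
    | refl (τ) : CEq τ τ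
    | symm : CEq τ ρ → CEq ρ τ
    | trans : CEq τ ρ → CEq ρ σ → CEq τ σ
    | comm (τ ρ) : CEq (.tens τ ρ) (.tens ρ τ)
    | assoc (τ ρ σ) : CEq (.tens (.tens τ ρ) σ) (.tens τ (.tens ρ σ))
    | unit (τ) : CEq (.tens τ .one) τ
    | tensCongr : CEq τ τ' → CEq ρ ρ' → CEq (.tens τ ρ) (.tens τ' ρ')
    | arrCongr : CEq τ τ' → PEq α α' → CEq (.arr τ α) (.arr τ' α')
  inductive PEq : PTy → PTy → Prop
    | refl (α) : PEq α α
    | symm : PEq α β → PEq β α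
    | trans : PEq α β → PEq β γ → PEq α γ
    | comm (α β) : PEq (.par α β) (.par β α)
    | assoc (α β γ) : PEq (.par (.par α β) γ) (.par α (.par β γ))
    | parCongr : PEq α α' → PEq β β' → PEq (.par α β) (.par α' β')
    | ofC : CEq τ τ' → PEq (.ofC τ) (.ofC τ')
end

def Ctx : Type := ℕ → CTy
def Ctx.empty : Ctx := fun _ => CTy.one
def Ctx.tens (Γ Δ : Ctx) : Ctx := fun n => CTy.tens (Γ n) (Δ n)
def Ctx.single (x : ℕ) (τ : CTy) : Ctx := fun n => if n = x then τ else CTy.one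
def Ctx.cons (τ : CTy) (Γ : Ctx) : Ctx := fun n =>
  match n with
  | 0 => τ
  | n+1 => Γ n
def CtxEq (Γ Δ : Ctx) : Prop := ∀ n, CEq (Γ n) (Δ n)

def tensList (l : List CTy) : CTy := l.foldr CTy.tens CTy.one
def tensFin (n : ℕ) (f : Fin n → CTy) : CTy := tensList (List.ofFn f)
def tensCtxFin (n : ℕ) (Δ : Fin n → Ctx) : Ctx := fun x => tensFin n (fun i => Δ i x)

def parList : List PTy → PTy
  | [] => PTy.ofC CTy.one
  | [α] => α
  | α :: β :: rest => PTy.par α (parList (β :: rest))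

def parFin (n : ℕ) (f : Fin n → PTy) : PTy := parList (List.ofFn f)

/-- ⅋ᵏ1 : the par of k copies of 1 (left associated); junk value at 0. -/
def parOnes : ℕ → PTy
  | 0 => PTy.ofC CTy.one
  | 1 => PTy.ofC CTy.one
  | n+2 => PTy.par (parOnes (n+1)) (PTy.ofC CTy.one)

/-- Terms of Λ₊∥ in de Bruijn notation. -/
inductive Tm : Type
  | var : ℕ → Tm
  | lam : Tm → Tm
  | app : Tm → Tm → Tm
  | plus : Tm → Tm → Tm
  | par : Tm → Tm → Tm

def IsValue : Tm → Prop
  | .var _ => True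
  | .lam _ => True
  | _ => False

def IsPar : Tm → Prop
  | .par _ _ => True
  | _ => False

def shiftTm (c : ℕ) : Tm → Tm
  | .var n => if n < c then .var n else .var (n+1)
  | .lam M => .lam (shiftTm (c+1) M)
  | .app M N => .app (shiftTm c M) (shiftTm c N)
  | .plus M N => .plus (shiftTm c M) (shiftTm c N)
  | .par M N => .par (shiftTm c M) (shiftTm c N)

/-- Capture-avoiding substitution `M[V/k]` (de Bruijn). -/
def substTm : Tm → ℕ → Tm → Tm
  | .var n, k, V => if n = k then V else if k < n then .var (n-1) else .var n
  | .lam M, k, V => .lam (substTm M (k+1) (shiftTm 0 V))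
  | .app M N, k, V => .app (substTm M k V) (substTm N k V)
  | .plus M N, k, V => .plus (substTm M k V) (substTm N k V)
  | .par M N, k, V => .par (substTm M k V) (substTm N k V)

def closedUnder : ℕ → Tm → Prop
  | d, .var n => n < d
  | d, .lam M => closedUnder (d+1) M
  | d, .app M N => closedUnder d M ∧ closedUnder d N
  | d, .plus M N => closedUnder d M ∧ closedUnder d N
  | d, .par M N => closedUnder d M ∧ closedUnder d N

def Closed (M : Tm) : Prop := closedUnder 0 M

/-- One-step reduction; the boolean flag records whether a +-reduction is used. -/
inductive Step : Bool → Tm → Tm → Prop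
  | beta {M V} : IsValue V → Step false (.app (.lam M) V) (substTm M 0 V)
  | plusL (M N) : Step true (.plus M N) M
  | plusR (M N) : Step true (.plus M N) N
  | parAppL (M N P) : Step false (.app (.par M N) P) (.par (.app M P) (.app N P))
  | parAppR {V} (M N) : IsValue V → Step false (.app V (.par M N)) (.par (.app V M) (.app V N))
  | parL {b M M'} (N) : Step b M M' → Step b (.par M N) (.par M' N)
  | parR {b N N'} (M) : Step b N N' → Step b (.par M N) (.par M N')
  | appL {b M M'} (N) : Step b M M' → ¬ IsPar M → Step b (.app M N) (.app M' N)
  | appR {b M M' V} : IsValue V → Step b M M' → ¬ IsPar M → Step b (.app V M) (.app V M')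

/-- The two contracta of a single +-redex, reduced in context. -/
inductive PlusPair : Tm → Tm → Tm → Prop
  | base (M N) : PlusPair (.plus M N) M N
  | parL {M M₁ M₂} (N) : PlusPair M M₁ M₂ → PlusPair (.par M N) (.par M₁ N) (.par M₂ N)
  | parR {N N₁ N₂} (M) : PlusPair N N₁ N₂ → PlusPair (.par M N) (.par M N₁) (.par M N₂)
  | appL {M M₁ M₂} (N) : PlusPair M M₁ M₂ → ¬ IsPar M → PlusPair (.app M N) (.app M₁ N) (.app M₂ N)
  | appR {M M₁ M₂ V} : IsValue V → PlusPair M M₁ M₂ → ¬ IsPar M → PlusPair (.app V M) (.app V M₁) (.app V M₂)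

/-- n-step reduction. -/
inductive Steps : ℕ → Tm → Tm → Prop
  | refl (M) : Steps 0 M M
  | head {b M N P n} : Step b M N → Steps n N P → Steps (n+1) M P

/-- A closed term converges iff it reduces to a parallel composition of values. -/
def Converges (M : Tm) : Prop :=
  ∃ (n : ℕ) (V : Tm) (Vs : List Tm), IsValue V ∧ (∀ W ∈ Vs, IsValue W) ∧
    Steps n M (Vs.foldl Tm.par V)

/-- Typing derivations, indexed by the measure |π|. -/
inductive Deriv : Ctx → Tm → PTy → ℕ → Prop
  | ax (x : ℕ) (τ : CTy) : Deriv (Ctx.single x τ) (.var x) (.ofC τ) 0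
  | lamI (n : ℕ) (Δ : Fin n → Ctx) (τ : Fin n → CTy) (α : Fin n → PTy) (ms : Fin n → ℕ)
      (M : Tm) :
      (∀ i, Deriv (Ctx.cons (τ i) (Δ i)) M (α i) (ms i)) →
      Deriv (tensCtxFin n Δ) (.lam M)
        (.ofC (tensFin n (fun i => .arr (τ i) (α i)))) (∑ i, ms i)
  | appE (k : ℕ) (hk : 0 < k) (nf : Fin k → ℕ) (hn : ∀ i, 0 < nf i)
      (τ : ∀ i : Fin k, Fin (nf i) → CTy) (α : ∀ i : Fin k, Fin (nf i) → PTy)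
      (Δ : Ctx) (Γ : Fin k → Ctx) (m0 : ℕ) (ms : Fin k → ℕ) (M N : Tm) :
      Deriv Δ M (parFin k (fun i => .ofC (tensFin (nf i) (fun j => .arr (τ i j) (α i j))))) m0 →
      (∀ i, Deriv (Γ i) N (parFin (nf i) (fun j => .ofC (τ i j))) (ms i)) →
      Deriv (Ctx.tens Δ (tensCtxFin k Γ)) (.app M N)
        (parFin k (fun i => parFin (nf i) (α i)))
        ((m0 + (∑ i, ms i) + (∑ i, 2 * nf i)) - 1)
  | plusL {Δ M α m} (N) : Deriv Δ M α m → Deriv Δ (.plus M N) α (m+1)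
  | plusR {Δ N α m} (M) : Deriv Δ N α m → Deriv Δ (.plus M N) α (m+1)
  | parI {Δ Γ M N α β m m'} : Deriv Δ M α m → Deriv Γ N β m' →
      Deriv (Ctx.tens Δ Γ) (.par M N) (.par α β) (m + m')
  | eqv {Γ Γ' M α α' m} : Deriv Γ M α m → CtxEq Γ Γ' → PEq α α' → Deriv Γ' M α' m

def deltaTm : Tm := .lam (.app (.var 0) (.var 0))
def OmegaTm : Tm := .app deltaTm deltaTm
def Idt : Tm := .lam (.var 0)
def dstarTm : Tm := .lam (.lam (.app (.var 1) (.var 1)))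
def YstarTm : Tm := .app dstarTm dstarTm
-- ===== auxiliary development =====

lemma isvalue_lam (M : Tm) : IsValue (Tm.lam M) := trivial

lemma not_ispar_app (A B : Tm) : ¬ IsPar (Tm.app A B) := fun h => h

lemma not_ispar_Y : ¬ IsPar YstarTm := fun h => h

lemma value_no_step {M N : Tm} {b : Bool} (hv : IsValue M) (s : Step b M N) : False := by
  cases M with
  | var x => nomatch s
  | lam M => nomatch s
  | app A B => exact hv
  | plus A B => exact hv
  | par A B => exact hv

lemma subst_Y (V : Tm) : substTm YstarTm 0 V = YstarTm := by
  simp [YstarTm, dstarTm, substTm, shiftTm]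

lemma step_Y : Step false YstarTm (Tm.lam YstarTm) := by
  have h := Step.beta (M := Tm.lam (Tm.app (Tm.var 1) (Tm.var 1))) (V := dstarTm) trivial
  have e : substTm (Tm.lam (Tm.app (Tm.var 1) (Tm.var 1))) 0 dstarTm = Tm.lam YstarTm := by
    simp [YstarTm, dstarTm, substTm, shiftTm]
  rw [e] at h
  exact h

lemma beta_lamY {V : Tm} (hV : IsValue V) :
    Step false (Tm.app (Tm.lam YstarTm) V) YstarTm := by
  have h := Step.beta (M := YstarTm) (V := V) hV
  rwa [subst_Y] at h

def ConvValN (n : ℕ) (M : Tm) : Prop := ∃ V, IsValue V ∧ Steps n M V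
def ConvVal (M : Tm) : Prop := ∃ n, ConvValN n M
def ConvN (n : ℕ) (M : Tm) : Prop :=
  ∃ (V : Tm) (Vs : List Tm), IsValue V ∧ (∀ W ∈ Vs, IsValue W) ∧ Steps n M (Vs.foldl Tm.par V)

lemma conv_iff {M : Tm} : Converges M ↔ ∃ n, ConvN n M := by
  constructor
  · rintro ⟨n, V, Vs, h1, h2, h3⟩; exact ⟨n, V, Vs, h1, h2, h3⟩
  · rintro ⟨n, V, Vs, h1, h2, h3⟩; exact ⟨n, V, Vs, h1, h2, h3⟩

lemma steps_trans {m n : ℕ} {A B C : Tm} (h1 : Steps m A B) (h2 : Steps n B C) :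
    Steps (m + n) A C := by
  induction h1 with
  | refl M => simpa using h2
  | @head b M N P k s rest ih =>
      have e : k + 1 + n = (k + n) + 1 := by omega
      rw [e]
      exact Steps.head s (ih h2)

lemma convval_of_value {V : Tm} (h : IsValue V) : ConvVal V := ⟨0, V, h, Steps.refl V⟩

lemma conv_of_convval {M : Tm} : ConvVal M → Converges M := by
  rintro ⟨n, V, hV, hs⟩
  exact ⟨n, V, [], hV, by simp, hs⟩

lemma conv_of_steps {j : ℕ} {M N : Tm} (h : Steps j M N) : Converges N → Converges M := by
  rintro ⟨n, V, Vs, h1, h2, h3⟩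
  exact ⟨j + n, V, Vs, h1, h2, steps_trans h h3⟩

lemma convval_of_steps {j : ℕ} {M N : Tm} (h : Steps j M N) : ConvVal N → ConvVal M := by
  rintro ⟨n, V, h1, h3⟩
  exact ⟨j + n, V, h1, steps_trans h h3⟩

lemma steps_one {b : Bool} {M N : Tm} (h : Step b M N) : Steps 1 M N :=
  Steps.head h (Steps.refl N)

lemma conv_Y : Converges YstarTm :=
  conv_of_steps (steps_one step_Y) (conv_of_convval (convval_of_value (isvalue_lam _)))

lemma convval_Y : ConvVal YstarTm :=
  convval_of_steps (steps_one step_Y) (convval_of_value (isvalue_lam _))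

lemma steps_parL {n : ℕ} {A A' B : Tm} (h : Steps n A A') :
    Steps n (Tm.par A B) (Tm.par A' B) := by
  induction h with
  | refl M => exact Steps.refl _
  | head s rest ih => exact Steps.head (Step.parL _ s) ih

lemma steps_parR {n : ℕ} {A B B' : Tm} (h : Steps n B B') :
    Steps n (Tm.par A B) (Tm.par A B') := by
  induction h with
  | refl M => exact Steps.refl _
  | head s rest ih => exact Steps.head (Step.parR _ s) ih

lemma par_steps {n : ℕ} {A B T : Tm} (h : Steps n (Tm.par A B) T) :
    ∃ n₁ n₂ A' B', n₁ + n₂ = n ∧ Steps n₁ A A' ∧ Steps n₂ B B' ∧ T = Tm.par A' B' := by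
  induction n generalizing A B with
  | zero =>
      cases h with
      | refl => exact ⟨0, 0, A, B, rfl, Steps.refl _, Steps.refl _, rfl⟩
  | succ k ih =>
      cases h with
      | head s rest =>
        cases s with
        | parL _ s' =>
            obtain ⟨n₁, n₂, A', B', hsum, h1, h2, rfl⟩ := ih rest
            exact ⟨1 + n₁, n₂, A', B', by omega, steps_trans (steps_one s') h1, h2, rfl⟩
        | parR _ s' =>
            obtain ⟨n₁, n₂, A', B', hsum, h1, h2, rfl⟩ := ih rest
            exact ⟨n₁, 1 + n₂, A', B', by omega, h1, steps_trans (steps_one s') h2, rfl⟩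

lemma steps_par_value {n : ℕ} {A B V : Tm} (h : Steps n (Tm.par A B) V) (hV : IsValue V) :
    False := by
  obtain ⟨_, _, _, _, _, _, _, rfl⟩ := par_steps h
  exact hV

lemma pv {n : ℕ} {A B : Tm} (h : ConvValN n (Tm.par A B)) : False := by
  obtain ⟨V, hV, hs⟩ := h
  exact steps_par_value hs hV

lemma notPar_of_steps_value {n : ℕ} {Q V : Tm} (h : Steps n Q V) (hV : IsValue V) :
    ¬ IsPar Q := by
  intro hp
  cases Q with
  | par A B => exact steps_par_value h hV
  | var x => exact hp
  | lam M => exact hp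
  | app A B => exact hp
  | plus A B => exact hp

lemma pd {n : ℕ} {A B : Tm} (h : ConvN n (Tm.par A B)) :
    ∃ n₁ n₂, n₁ ≤ n ∧ n₂ ≤ n ∧ ConvN n₁ A ∧ ConvValN n₂ B := by
  obtain ⟨V, Vs, hV, hVs, hs⟩ := h
  obtain ⟨n₁, n₂, A', B', hsum, h1, h2, heq⟩ := par_steps hs
  rcases Vs.eq_nil_or_concat with rfl | ⟨l, W, rfl⟩
  · simp only [List.foldl_nil] at heq
    subst heq
    exact absurd hV (by exact fun h => h)
  · simp only [List.concat_eq_append, List.foldl_append, List.foldl_cons, List.foldl_nil] at heq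
    injection heq with e1 e2
    subst e1; subst e2
    refine ⟨n₁, n₂, by omega, by omega, ⟨V, l, hV, ?_, h1⟩, ⟨W, ?_, h2⟩⟩
    · intro W' hW'; exact hVs W' (by simp [hW'])
    · exact hVs W (by simp)

lemma conv_par_compose {C D : Tm} (h1 : Converges C) (h2 : ConvVal D) :
    Converges (Tm.par C D) := by
  obtain ⟨n, V, Vs, hV, hVs, hs⟩ := h1
  obtain ⟨n', V', hV', hs'⟩ := h2
  refine ⟨n + n', V, Vs ++ [V'], hV, ?_, ?_⟩
  · intro W hW
    rcases List.mem_append.mp hW with h | h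
    · exact hVs W h
    · simp at h; subst h; exact hV'
  · rw [List.foldl_append]
    simp only [List.foldl_cons, List.foldl_nil]
    exact steps_trans (steps_parL hs) (steps_parR hs')

lemma foldl_app_shape : ∀ (Qs : List Tm) (X Q : Tm),
    ∃ C D, List.foldl Tm.app (Tm.app X Q) Qs = Tm.app C D := by
  intro Qs
  induction Qs with
  | nil => exact fun X Q => ⟨X, Q, rfl⟩
  | cons Q₂ Qs ih => exact fun X Q => ih (Tm.app X Q) Q₂

lemma step_spine : ∀ (Qs : List Tm) {X Q U : Tm} {b : Bool},
    Step b (List.foldl Tm.app (Tm.app X Q) Qs) U →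
    ∃ Y, Step b (Tm.app X Q) Y ∧ U = List.foldl Tm.app Y Qs := by
  intro Qs
  induction Qs with
  | nil => exact fun h => ⟨_, h, rfl⟩
  | cons Q₂ Qs ih =>
      intro X Q U b h
      obtain ⟨Y₂, hY₂, rfl⟩ := ih h
      cases hY₂ with
      | appL _ h' hnp => exact ⟨_, h', rfl⟩
      | appR hV h' hnp => exact absurd hV (fun h => h)
      | parAppR _ _ hV => exact absurd hV (fun h => h)

lemma lift1 : ∀ (Qs : List Tm) {W W' : Tm} {b : Bool}, Step b W W' → ¬ IsPar W →
    Step b (List.foldl Tm.app W Qs) (List.foldl Tm.app W' Qs) := by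
  intro Qs
  induction Qs with
  | nil => exact fun h _ => h
  | cons Q Qs ih =>
      intro W W' b h hnp
      exact ih (Step.appL Q h hnp) (not_ispar_app _ _)

lemma lift_appR_steps {F : Tm} (hF : IsValue F) : ∀ {n : ℕ} {Q V : Tm}, Steps n Q V → IsValue V →
    ∀ Qs : List Tm, Steps n (List.foldl Tm.app (Tm.app F Q) Qs)
      (List.foldl Tm.app (Tm.app F V) Qs) := by
  intro n Q V h
  induction h with
  | refl M => exact fun _ _ => Steps.refl _
  | @head b M N P k s rest ih =>
      intro hV Qs
      have hnp : ¬ IsPar M := notPar_of_steps_value (Steps.head s rest) hV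
      exact Steps.head (lift1 Qs (Step.appR hF s hnp) (not_ispar_app _ _)) (ih hV Qs)

lemma foldl_par_final {V : Tm} {Vs : List Tm} (hV : IsValue V) :
    IsValue (Vs.foldl Tm.par V) ∨ IsPar (Vs.foldl Tm.par V) := by
  rcases Vs.eq_nil_or_concat with rfl | ⟨l, W, rfl⟩
  · exact Or.inl hV
  · right
    simp only [List.concat_eq_append, List.foldl_append, List.foldl_cons, List.foldl_nil]
    trivial

/-- Every reduction of a nonempty application spine starts with a step at the innermost node. -/
lemma get_first_step {m : ℕ} {Qs : List Tm} {X Q T : Tm}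
    (h : Steps m (List.foldl Tm.app (Tm.app X Q) Qs) T) (hT : IsValue T ∨ IsPar T) :
    ∃ b Y n', m = n' + 1 ∧ Step b (Tm.app X Q) Y ∧ Steps n' (List.foldl Tm.app Y Qs) T := by
  cases h with
  | refl =>
      obtain ⟨C, D, hCD⟩ := foldl_app_shape Qs X Q
      rw [hCD] at hT
      rcases hT with h | h
      · exact absurd h (fun h => h)
      · exact absurd h (fun h => h)
  | @head b M N P k s rest =>
      obtain ⟨Y, hY, rfl⟩ := step_spine Qs s
      exact ⟨b, Y, k, rfl, hY, rest⟩

lemma vd : ∀ (n : ℕ) {X P : Tm}, ConvValN n (Tm.app X P) → ConvVal X ∧ ConvVal P := by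
  intro n
  induction n using Nat.strong_induction_on with
  | _ n ih =>
  rintro X P ⟨V, hV, hs⟩
  cases hs with
  | refl => exact absurd hV (fun h => h)
  | @head b M N P' k s rest =>
      cases s with
      | beta hPval =>
          exact ⟨convval_of_value (isvalue_lam _), convval_of_value hPval⟩
      | parAppL M' N' _ => exact absurd (steps_par_value rest hV) (fun h => h)
      | parAppR _ _ hV' => exact absurd (steps_par_value rest hV) (fun h => h)
      | appL _ s' hnp =>
          obtain ⟨h1, h2⟩ := ih k (by omega) ⟨V, hV, rest⟩
          exact ⟨convval_of_steps (steps_one s') h1, h2⟩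
      | appR hXv s' hnp =>
          obtain ⟨h1, h2⟩ := ih k (by omega) ⟨V, hV, rest⟩
          exact ⟨convval_of_value hXv, convval_of_steps (steps_one s') h2⟩

lemma fv : ∀ (Qs : List Tm) {n : ℕ} {E₁ E₂ : Tm},
    ConvValN n (List.foldl Tm.app (Tm.par E₁ E₂) Qs) → False := by
  intro Qs
  induction Qs with
  | nil => exact fun h => pv h
  | cons Q Qs ih =>
      rintro n E₁ E₂ ⟨V, hV, hs⟩
      obtain ⟨b, Y, n', rfl, hY, rest⟩ := get_first_step hs (Or.inl hV)
      cases hY with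
      | parAppL => exact ih ⟨V, hV, rest⟩
      | parAppR _ _ hV' => exact hV'
      | appL _ _ hnp => exact hnp trivial
      | appR hV' _ _ => exact hV'

lemma extract : ∀ (Qs : List Tm) {n : ℕ} {E₁ E₂ : Tm},
    ConvN n (List.foldl Tm.app (Tm.par E₁ E₂) Qs) → ConvVal E₂ := by
  intro Qs
  induction Qs with
  | nil =>
      intro n E₁ E₂ h
      obtain ⟨n₁, n₂, _, _, _, h2⟩ := pd h
      exact ⟨n₂, h2⟩
  | cons Q Qs ih =>
      rintro n E₁ E₂ ⟨V, Vs, hV, hVs, hs⟩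
      obtain ⟨b, Y, n', rfl, hY, rest⟩ := get_first_step hs (foldl_par_final hV)
      cases hY with
      | parAppL =>
          have h := ih ⟨V, Vs, hV, hVs, rest⟩
          obtain ⟨k, hk⟩ := h
          exact (vd k hk).1
      | parAppR _ _ hV' => exact absurd hV' (fun h => h)
      | appL _ _ hnp => exact absurd trivial hnp
      | appR hV' _ _ => exact absurd hV' (fun h => h)

/-- Simulation relation: `R X B` means `B` is an "ogre version" of `X`. -/
inductive Sim : Tm → Tm → Prop
  | top (M) : Sim M YstarTm
  | topv {M} : IsValue M → Sim M (Tm.lam YstarTm)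
  | par {A B C D} : Sim A C → Sim B D → Sim (Tm.par A B) (Tm.par C D)
  | app {M N} (Q) : Sim M N → Sim (Tm.app M Q) (Tm.app N Q)

theorem main : ∀ (n : ℕ) (X B : Tm), Sim X B → ∀ m (Ps : List Tm), m ≤ n →
    ((ConvN m (List.foldl Tm.app X Ps)) → Converges (List.foldl Tm.app B Ps)) ∧
    ((ConvValN m (List.foldl Tm.app X Ps)) → ConvVal (List.foldl Tm.app B Ps)) := by
  intro n
  induction n using Nat.strong_induction_on with
  | _ n OIH =>
  intro X B hR
  induction hR with
  | top M =>
    intro m Ps hm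
    cases Ps with
    | nil => exact ⟨fun _ => conv_Y, fun _ => convval_Y⟩
    | cons Q Qs =>
      constructor
      · rintro ⟨V, Vs, hV, hVs, hs⟩
        obtain ⟨b, Y, n', rfl, hY, rest⟩ := get_first_step hs (foldl_par_final hV)
        have hn' : n' < n := by omega
        cases hY with
        | beta hQval =>
            -- M = lam M₀, Q value
            have hrest := (OIH n' hn' _ _ (Sim.top _) n' Qs le_rfl).1 ⟨V, Vs, hV, hVs, rest⟩
            have st1 := lift1 (Q :: Qs) step_Y not_ispar_Y
            have st2 := lift1 Qs (beta_lamY hQval) (not_ispar_app _ _)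
            exact conv_of_steps (steps_trans (steps_one st1) (steps_one st2)) hrest
        | parAppL M₁ M₂ _ =>
            have hcv : ConvN n' (List.foldl Tm.app
                (Tm.par (Tm.app M₁ Q) (Tm.app M₂ Q)) Qs) := ⟨V, Vs, hV, hVs, rest⟩
            have hrest := (OIH n' hn' _ _ (Sim.top _) n' Qs le_rfl).1 hcv
            obtain ⟨k, hk⟩ := extract Qs hcv
            obtain ⟨j, Vq, hVq, hQsteps⟩ := (vd k hk).2
            have st1 := lift1 (Q :: Qs) step_Y not_ispar_Y
            have st2 := lift_appR_steps (F := Tm.lam YstarTm) (isvalue_lam _) hQsteps hVq Qs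
            have st3 := lift1 Qs (beta_lamY hVq) (not_ispar_app _ _)
            exact conv_of_steps (steps_trans (steps_one st1)
              (steps_trans st2 (steps_one st3))) hrest
        | parAppR Q₁ Q₂ hMval =>
            have hcv : ConvN n' (List.foldl Tm.app
                (Tm.par (Tm.app M Q₁) (Tm.app M Q₂)) Qs) := ⟨V, Vs, hV, hVs, rest⟩
            have hRnew : Sim (Tm.par (Tm.app M Q₁) (Tm.app M Q₂))
                (Tm.par (Tm.app (Tm.lam YstarTm) Q₁) (Tm.app (Tm.lam YstarTm) Q₂)) :=
              Sim.par (Sim.app _ (Sim.topv hMval)) (Sim.app _ (Sim.topv hMval))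
            have hrest := (OIH n' hn' _ _ hRnew n' Qs le_rfl).1 hcv
            have st1 := lift1 (Q₁.par Q₂ :: Qs) step_Y not_ispar_Y
            have st2 := lift1 Qs (Step.parAppR Q₁ Q₂ (isvalue_lam YstarTm)) (not_ispar_app _ _)
            exact conv_of_steps (steps_trans (steps_one st1) (steps_one st2)) hrest
        | appL _ s' hnp =>
            exact (OIH n' hn' _ _ (Sim.top _) n' (Q :: Qs) le_rfl).1 ⟨V, Vs, hV, hVs, rest⟩
        | appR hMval s' hnpQ =>
            rename_i Q'
            have hRnew : Sim (Tm.app M Q') (Tm.app (Tm.lam YstarTm) Q') :=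
              Sim.app _ (Sim.topv hMval)
            have hrest := (OIH n' hn' _ _ hRnew n' Qs le_rfl).1 ⟨V, Vs, hV, hVs, rest⟩
            have st1 := lift1 (Q :: Qs) step_Y not_ispar_Y
            have st2 := lift1 Qs (Step.appR (isvalue_lam YstarTm) s' hnpQ) (not_ispar_app _ _)
            exact conv_of_steps (steps_trans (steps_one st1) (steps_one st2)) hrest
      · rintro ⟨V, hV, hs⟩
        obtain ⟨b, Y, n', rfl, hY, rest⟩ := get_first_step hs (Or.inl hV)
        have hn' : n' < n := by omega
        cases hY with
        | beta hQval =>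
            have hrest := (OIH n' hn' _ _ (Sim.top _) n' Qs le_rfl).2 ⟨V, hV, rest⟩
            have st1 := lift1 (Q :: Qs) step_Y not_ispar_Y
            have st2 := lift1 Qs (beta_lamY hQval) (not_ispar_app _ _)
            exact convval_of_steps (steps_trans (steps_one st1) (steps_one st2)) hrest
        | parAppL M₁ M₂ _ => exact absurd (fv Qs ⟨V, hV, rest⟩) (fun h => h)
        | parAppR Q₁ Q₂ hMval => exact absurd (fv Qs ⟨V, hV, rest⟩) (fun h => h)
        | appL _ s' hnp =>
            exact (OIH n' hn' _ _ (Sim.top _) n' (Q :: Qs) le_rfl).2 ⟨V, hV, rest⟩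
        | appR hMval s' hnpQ =>
            rename_i Q'
            have hRnew : Sim (Tm.app M Q') (Tm.app (Tm.lam YstarTm) Q') :=
              Sim.app _ (Sim.topv hMval)
            have hrest := (OIH n' hn' _ _ hRnew n' Qs le_rfl).2 ⟨V, hV, rest⟩
            have st1 := lift1 (Q :: Qs) step_Y not_ispar_Y
            have st2 := lift1 Qs (Step.appR (isvalue_lam YstarTm) s' hnpQ) (not_ispar_app _ _)
            exact convval_of_steps (steps_trans (steps_one st1) (steps_one st2)) hrest
  | @topv M hMval =>
    intro m Ps hm
    cases Ps with
    | nil =>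
        exact ⟨fun _ => conv_of_convval (convval_of_value (isvalue_lam _)),
               fun _ => convval_of_value (isvalue_lam _)⟩
    | cons Q Qs =>
      constructor
      · rintro ⟨V, Vs, hV, hVs, hs⟩
        obtain ⟨b, Y, n', rfl, hY, rest⟩ := get_first_step hs (foldl_par_final hV)
        have hn' : n' < n := by omega
        cases hY with
        | beta hQval =>
            have hrest := (OIH n' hn' _ _ (Sim.top _) n' Qs le_rfl).1 ⟨V, Vs, hV, hVs, rest⟩
            have st2 := lift1 Qs (beta_lamY hQval) (not_ispar_app _ _)
            exact conv_of_steps (steps_one st2) hrest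
        | parAppL M₁ M₂ _ => exact absurd hMval (fun h => h)
        | parAppR Q₁ Q₂ _ =>
            have hcv : ConvN n' (List.foldl Tm.app
                (Tm.par (Tm.app M Q₁) (Tm.app M Q₂)) Qs) := ⟨V, Vs, hV, hVs, rest⟩
            have hRnew : Sim (Tm.par (Tm.app M Q₁) (Tm.app M Q₂))
                (Tm.par (Tm.app (Tm.lam YstarTm) Q₁) (Tm.app (Tm.lam YstarTm) Q₂)) :=
              Sim.par (Sim.app _ (Sim.topv hMval)) (Sim.app _ (Sim.topv hMval))
            have hrest := (OIH n' hn' _ _ hRnew n' Qs le_rfl).1 hcv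
            have st2 := lift1 Qs (Step.parAppR Q₁ Q₂ (isvalue_lam YstarTm)) (not_ispar_app _ _)
            exact conv_of_steps (steps_one st2) hrest
        | appL _ s' hnp => exact absurd (value_no_step hMval s') (fun h => h)
        | appR hMv2 s' hnpQ =>
            rename_i Q'
            have hRnew : Sim (Tm.app M Q') (Tm.app (Tm.lam YstarTm) Q') :=
              Sim.app _ (Sim.topv hMval)
            have hrest := (OIH n' hn' _ _ hRnew n' Qs le_rfl).1 ⟨V, Vs, hV, hVs, rest⟩
            have st2 := lift1 Qs (Step.appR (isvalue_lam YstarTm) s' hnpQ) (not_ispar_app _ _)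
            exact conv_of_steps (steps_one st2) hrest
      · rintro ⟨V, hV, hs⟩
        obtain ⟨b, Y, n', rfl, hY, rest⟩ := get_first_step hs (Or.inl hV)
        have hn' : n' < n := by omega
        cases hY with
        | beta hQval =>
            have hrest := (OIH n' hn' _ _ (Sim.top _) n' Qs le_rfl).2 ⟨V, hV, rest⟩
            have st2 := lift1 Qs (beta_lamY hQval) (not_ispar_app _ _)
            exact convval_of_steps (steps_one st2) hrest
        | parAppL M₁ M₂ _ => exact absurd hMval (fun h => h)
        | parAppR Q₁ Q₂ _ => exact absurd (fv Qs ⟨V, hV, rest⟩) (fun h => h)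
        | appL _ s' hnp => exact absurd (value_no_step hMval s') (fun h => h)
        | appR hMv2 s' hnpQ =>
            rename_i Q'
            have hRnew : Sim (Tm.app M Q') (Tm.app (Tm.lam YstarTm) Q') :=
              Sim.app _ (Sim.topv hMval)
            have hrest := (OIH n' hn' _ _ hRnew n' Qs le_rfl).2 ⟨V, hV, rest⟩
            have st2 := lift1 Qs (Step.appR (isvalue_lam YstarTm) s' hnpQ) (not_ispar_app _ _)
            exact convval_of_steps (steps_one st2) hrest
  | @par X₁ X₂ C D hR₁ hR₂ IH₁ IH₂ =>
    intro m Ps hm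
    cases Ps with
    | nil =>
      constructor
      · intro h
        obtain ⟨n₁, n₂, hn₁, hn₂, hc₁, hc₂⟩ := pd h
        have h1 := (IH₁ n₁ [] (le_trans hn₁ hm)).1 hc₁
        have h2 := (IH₂ n₂ [] (le_trans hn₂ hm)).2 hc₂
        exact conv_par_compose h1 h2
      · intro h; exact absurd (pv h) (fun h => h)
    | cons Q Qs =>
      constructor
      · rintro ⟨V, Vs, hV, hVs, hs⟩
        obtain ⟨b, Y, n', rfl, hY, rest⟩ := get_first_step hs (foldl_par_final hV)
        have hn' : n' < n := by omega
        cases hY with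
        | parAppL _ _ _ =>
            have hcv : ConvN n' (List.foldl Tm.app
                (Tm.par (Tm.app X₁ Q) (Tm.app X₂ Q)) Qs) := ⟨V, Vs, hV, hVs, rest⟩
            have hRnew : Sim (Tm.par (Tm.app X₁ Q) (Tm.app X₂ Q))
                (Tm.par (Tm.app C Q) (Tm.app D Q)) :=
              Sim.par (Sim.app _ hR₁) (Sim.app _ hR₂)
            have hrest := (OIH n' hn' _ _ hRnew n' Qs le_rfl).1 hcv
            have st2 := lift1 Qs (Step.parAppL C D Q) (not_ispar_app _ _)
            exact conv_of_steps (steps_one st2) hrest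
        | parAppR Q₁ Q₂ hV' => exact absurd hV' (fun h => h)
        | appL _ s' hnp => exact absurd trivial hnp
        | appR hV' s' hnpQ => exact absurd hV' (fun h => h)
      · rintro ⟨V, hV, hs⟩
        obtain ⟨b, Y, n', rfl, hY, rest⟩ := get_first_step hs (Or.inl hV)
        cases hY with
        | parAppL _ _ _ => exact absurd (fv Qs ⟨V, hV, rest⟩) (fun h => h)
        | parAppR Q₁ Q₂ hV' => exact absurd hV' (fun h => h)
        | appL _ s' hnp => exact absurd trivial hnp
        | appR hV' s' hnpQ => exact absurd hV' (fun h => h)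
  | @app M N Q₀ hR₀ IH =>
    intro m Ps hm
    exact IH m (Q₀ :: Ps) hm

theorem ogre_is_top (M : Tm) (hM : Closed M) :
    ∀ Ps : List Tm, (∀ P ∈ Ps, Closed P) →
      Converges (Ps.foldl Tm.app M) → Converges (Ps.foldl Tm.app YstarTm) := by
  intro Ps _ hconv
  obtain ⟨n, hn⟩ := conv_iff.mp hconv
  exact (main n M YstarTm (Sim.top M) n Ps le_rfl).1 hn
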